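/- arXiv:2510.17781 — 3 statements merged into one kernel-verified Lean document; each statement's English description precedes it below -/
import Mathlib

section
/- If G is a K×N matrix and F is an (N−K)×N matrix over a field such that the vertically stacked N×N matrix (G; F) is invertible, and G⊥ is an (N−K)×N matrix of rank N−K whose rows are orthogonal to the rows of G (i.e. G⊥ · Gᵀ = 0), then the (N−K)×(N−K) matrix G⊥ · Fᵀ is invertible. -/
/-!
A vector `x` with `x ᵥ* (G⊥ * Fᵀ) = 0` gives `w = x ᵥ* G⊥`, which is annihilated by `F` by
assumption and by `G` because `G⊥ * Gᵀ = 0`. Hence the invertible stacked matrix `(G; F)`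
annihilates `w`, so `w = 0`, and `x = 0` since the rows of `G⊥` are linearly independent.
-/

namespace Matrix

variable {R : Type*} {k m m₁ m₂ n : Type*}

theorem linearIndependent_row_iff_rank_eq_card [Field R] [Fintype m] [Fintype n]
    {A : Matrix m n R} :
    LinearIndependent R A.row ↔ A.rank = Fintype.card m := by
  rw [linearIndependent_iff_card_eq_finrank_span, Set.finrank, rank_eq_finrank_span_row, eq_comm]

theorem mulVec_vecMul_eq_vecMul_mul_transpose [CommSemiring R] [Fintype k] [Fintype n]
    (A : Matrix m n R) (B : Matrix k n R) (x : k → R) :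
    A *ᵥ (x ᵥ* B) = x ᵥ* (B * Aᵀ) := by
  rw [← vecMul_transpose, vecMul_vecMul]

theorem eq_zero_of_isUnit_fromRows_submatrix [CommRing R] [Fintype n] [DecidableEq n]
    {A : Matrix m₁ n R} {B : Matrix m₂ n R} {r : n → m₁ ⊕ m₂}
    (h : IsUnit ((fromRows A B).submatrix r id)) {w : n → R}
    (hA : A *ᵥ w = 0) (hB : B *ᵥ w = 0) : w = 0 := by
  refine mulVec_injective_of_isUnit h ?_
  rw [mulVec_zero, show (id : n → n) = Equiv.refl n from rfl, submatrix_mulVec_equiv]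
  ext i
  simp [hA, hB]

end Matrix

open Matrix

/-- If the vertically stacked `N × N` matrix `(G; F)` is invertible, and `G⊥` is an
`(N-K) × N` matrix of rank `N-K` whose rows are orthogonal to the rows of `G`
(`G⊥ * Gᵀ = 0`), then the `(N-K) × (N-K)` matrix `G⊥ * Fᵀ` is invertible. -/
theorem gperp_mul_f_transpose_isUnit {F : Type*} [Field F] {N K : ℕ} (hK : K ≤ N)
    (G : Matrix (Fin K) (Fin N) F) (Fm : Matrix (Fin (N - K)) (Fin N) F)
    (Gperp : Matrix (Fin (N - K)) (Fin N) F)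
    (hstack : IsUnit ((Matrix.fromRows G Fm).submatrix
      (fun i : Fin N => finSumFinEquiv.symm (Fin.cast (by omega) i)) id))
    (hrank : Gperp.rank = N - K)
    (horth : Gperp * G.transpose = 0) :
    IsUnit (Gperp * Fm.transpose) := by
  have hGperp : Function.Injective Gperp.vecMul :=
    vecMul_injective_iff.2 <| linearIndependent_row_iff_rank_eq_card.2 <| by simpa using hrank
  rw [← vecMul_injective_iff_isUnit, ← coe_vecMulLinear, injective_iff_map_eq_zero]
  intro x hx
  have hw : x ᵥ* Gperp = 0 := by
    refine eq_zero_of_isUnit_fromRows_submatrix hstack ?_ ?_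
    · rw [mulVec_vecMul_eq_vecMul_mul_transpose, horth, vecMul_zero]
    · rwa [mulVec_vecMul_eq_vecMul_mul_transpose]
  exact hGperp (hw.trans (zero_vecMul Gperp).symm)
end

section
/- Let B₁,…,B_m, Y₀, Y be finite random variables with B₁,…,B_m i.i.d.-style mutually independent and independent of Y₀. Suppose I₁,…,I_t are subsets of [m] such that every element of [m] lies in exactly s of the sets. Then ∑_{j=1}^t I(B_{I_j}; Y | Y₀) ≤ s · I(B_{[m]}; Y | Y₀). -/
open scoped Classical in
/-- Probability that the random variable `X` takes value `s`, under the (finite) probability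
mass function `p` on the sample space `Ω`. -/
noncomputable def pmfOf {Ω S : Type*} [Fintype Ω] (p : Ω → ℝ) (X : Ω → S) (s : S) : ℝ :=
  ∑ ω : Ω, if X ω = s then p ω else 0

/-- Shannon entropy (in nats) of the random variable `X` under `p`. -/
noncomputable def Hent {Ω S : Type*} [Fintype Ω] [Fintype S] (p : Ω → ℝ) (X : Ω → S) : ℝ :=
  -∑ s : S, pmfOf p X s * Real.log (pmfOf p X s)

/-- Conditional entropy `H(X | Z)`. -/
noncomputable def condH {Ω S U : Type*} [Fintype Ω] [Fintype S] [Fintype U]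
    (p : Ω → ℝ) (X : Ω → S) (Z : Ω → U) : ℝ :=
  Hent p (fun ω => (X ω, Z ω)) - Hent p Z

/-- Mutual information `I(X ; Y)`. -/
noncomputable def MI {Ω S T : Type*} [Fintype Ω] [Fintype S] [Fintype T]
    (p : Ω → ℝ) (X : Ω → S) (Y : Ω → T) : ℝ :=
  Hent p X + Hent p Y - Hent p (fun ω => (X ω, Y ω))

/-- Conditional mutual information `I(X ; Y | Z)`. -/
noncomputable def CMI {Ω S T U : Type*} [Fintype Ω] [Fintype S] [Fintype T] [Fintype U]
    (p : Ω → ℝ) (X : Ω → S) (Y : Ω → T) (Z : Ω → U) : ℝ :=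
  Hent p (fun ω => (X ω, Z ω)) + Hent p (fun ω => (Y ω, Z ω))
    - Hent p (fun ω => (X ω, Y ω, Z ω)) - Hent p Z

/-!
Write `F(J) = H(B_J, Y, Y₀)`. Subadditivity of entropy gives
`I(B_J; Y | Y₀) ≤ ∑_{i ∈ J} H(B_i) + H(Y, Y₀) - F(J)`, with equality for `J = [m]` by independence.
Since conditional mutual information is nonnegative, `F` is submodular, so
`F(J) - F(∅) ≥ ∑_{i ∈ J} (F({≤ i}) - F({< i}))`, with equality for `J = [m]` by telescoping.
Hence `I(B_J; Y | Y₀) ≤ ∑_{i ∈ J} cᵢ` and `I(B_{[m]}; Y | Y₀) = ∑ᵢ cᵢ` for the chain-rule terms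
`cᵢ = H(B_i) + F({< i}) - F({≤ i})`, and summing over the cover counts every `cᵢ` exactly `s` times.
-/
open Finset

section Entropy

variable {Ω S T U : Type*} [Fintype Ω] {p : Ω → ℝ}

theorem pmfOf_nonneg (hp0 : ∀ ω, 0 ≤ p ω) (X : Ω → S) (s : S) : 0 ≤ pmfOf p X s :=
  sum_nonneg fun ω _ => by split_ifs <;> simp [hp0]

theorem le_pmfOf_self (hp0 : ∀ ω, 0 ≤ p ω) (X : Ω → S) (ω : Ω) : p ω ≤ pmfOf p X (X ω) := by
  unfold pmfOf
  refine le_trans ?_ (single_le_sum (fun ω' _ => ?_) (mem_univ ω))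
  · simp
  · split_ifs <;> simp [hp0]

theorem sum_pmfOf_mul [Fintype S] (X : Ω → S) (φ : S → ℝ) :
    ∑ s, pmfOf p X s * φ s = ∑ ω, p ω * φ (X ω) := by
  classical
  simp only [pmfOf, sum_mul, ite_mul, zero_mul]
  rw [sum_comm]
  simp

theorem sum_pmfOf [Fintype S] (X : Ω → S) : ∑ s, pmfOf p X s = ∑ ω, p ω := by
  simpa using sum_pmfOf_mul (p := p) X 1

theorem sum_pmfOf_prodMk [Fintype S] (X : Ω → S) (Z : Ω → U) (z : U) :
    ∑ x, pmfOf p (fun ω => (X ω, Z ω)) (x, z) = pmfOf p Z z := by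
  classical
  simp only [pmfOf, Prod.ext_iff, ite_and]
  rw [sum_comm]
  simp

theorem Hent_eq_neg_sum_mul_log [Fintype S] (X : Ω → S) :
    Hent p X = -∑ ω, p ω * Real.log (pmfOf p X (X ω)) := by
  rw [Hent, sum_pmfOf_mul X]

theorem Hent_congr {S' : Type*} [Fintype S] [Fintype S'] {X : Ω → S} {X' : Ω → S'}
    (h : ∀ ω ω', X ω = X ω' ↔ X' ω = X' ω') : Hent p X = Hent p X' := by
  classical
  simp only [Hent_eq_neg_sum_mul_log, pmfOf, h]

theorem Hent_const (hp1 : ∑ ω, p ω = 1) [Fintype S] (c : S) : Hent p (fun _ => c) = 0 := by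
  simp [Hent_eq_neg_sum_mul_log, pmfOf, hp1]

noncomputable def condIndepLaw (p : Ω → ℝ) (X : Ω → S) (Y : Ω → T) (Z : Ω → U) (v : S × T × U) :
    ℝ :=
  pmfOf p (fun ω => (X ω, Z ω)) (v.1, v.2.2) * pmfOf p (fun ω => (Y ω, Z ω)) (v.2.1, v.2.2)
    / pmfOf p Z v.2.2

theorem condIndepLaw_nonneg (hp0 : ∀ ω, 0 ≤ p ω) (X : Ω → S) (Y : Ω → T) (Z : Ω → U)
    (v : S × T × U) : 0 ≤ condIndepLaw p X Y Z v :=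
  div_nonneg (mul_nonneg (pmfOf_nonneg hp0 _ _) (pmfOf_nonneg hp0 _ _)) (pmfOf_nonneg hp0 _ _)

variable [Fintype S] [Fintype T] [Fintype U]

theorem sum_condIndepLaw (X : Ω → S) (Y : Ω → T) (Z : Ω → U) :
    ∑ v, condIndepLaw p X Y Z v = ∑ ω, p ω := by
  have hz : ∀ z, ∑ x, ∑ y, condIndepLaw p X Y Z (x, y, z) = pmfOf p Z z := fun z => by
    simp only [condIndepLaw, ← sum_div, ← sum_mul_sum, sum_pmfOf_prodMk, mul_self_div_self]
  rw [← sum_pmfOf Z, Fintype.sum_prod_type, sum_comm]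
  simp only [Fintype.sum_prod_type]
  rw [sum_comm]
  exact sum_congr rfl fun z _ => by rw [sum_comm, hz]

theorem CMI_nonneg (hp0 : ∀ ω, 0 ≤ p ω) (X : Ω → S) (Y : Ω → T) (Z : Ω → U) :
    0 ≤ CMI p X Y Z := by
  set a := pmfOf p (fun ω => (X ω, Z ω))
  set b := pmfOf p (fun ω => (Y ω, Z ω))
  set c := pmfOf p Z
  set r := pmfOf p (fun ω => (X ω, Y ω, Z ω))
  set q := condIndepLaw p X Y Z
  have hr_q : ∑ v, r v * (q v / r v) ≤ ∑ ω, p ω := by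
    refine sum_condIndepLaw X Y Z ▸ sum_le_sum fun v _ => ?_
    rcases eq_or_ne (r v) 0 with hr | hr
    · simpa only [hr, zero_mul] using condIndepLaw_nonneg hp0 X Y Z v
    · rw [mul_div_cancel₀ _ hr]
  -- Gibbs: `log x ≤ x - 1` at `x = q / r`, outcome by outcome
  have hpoint : ∀ ω, p ω * (Real.log (a (X ω, Z ω)) + Real.log (b (Y ω, Z ω))
      - Real.log (c (Z ω)) - Real.log (r (X ω, Y ω, Z ω)))
      ≤ p ω * (q (X ω, Y ω, Z ω) / r (X ω, Y ω, Z ω)) - p ω := by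
    intro ω
    rcases (hp0 ω).eq_or_lt with hω | hω
    · simp [← hω]
    have ha := hω.trans_le (le_pmfOf_self hp0 (fun ω => (X ω, Z ω)) ω)
    have hb := hω.trans_le (le_pmfOf_self hp0 (fun ω => (Y ω, Z ω)) ω)
    have hc := hω.trans_le (le_pmfOf_self hp0 Z ω)
    have hr := hω.trans_le (le_pmfOf_self hp0 (fun ω => (X ω, Y ω, Z ω)) ω)
    have hlog := Real.log_le_sub_one_of_pos (div_pos (div_pos (mul_pos ha hb) hc) hr)
    rw [Real.log_div (by positivity) hr.ne', Real.log_div (by positivity) hc.ne',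
      Real.log_mul ha.ne' hb.ne'] at hlog
    rw [← mul_sub_one]
    exact mul_le_mul_of_nonneg_left hlog hω.le
  have hsum := sum_le_sum fun ω (_ : ω ∈ univ) => hpoint ω
  have hchange : ∑ ω, p ω * (q (X ω, Y ω, Z ω) / r (X ω, Y ω, Z ω)) = ∑ v, r v * (q v / r v) :=
    (sum_pmfOf_mul (fun ω => (X ω, Y ω, Z ω)) fun v => q v / r v).symm
  rw [sum_sub_distrib, hchange] at hsum
  simp only [mul_sub, mul_add, sum_add_distrib, sum_sub_distrib] at hsum
  rw [CMI]
  simp only [Hent_eq_neg_sum_mul_log]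
  linarith

theorem Hent_prod_le_add (hp0 : ∀ ω, 0 ≤ p ω) (hp1 : ∑ ω, p ω = 1) (X : Ω → S) (Y : Ω → T) :
    Hent p (fun ω => (X ω, Y ω)) ≤ Hent p X + Hent p Y := by
  have h := CMI_nonneg hp0 X Y (fun _ => ())
  have hX : Hent p (fun ω => (X ω, ())) = Hent p X := Hent_congr fun ω ω' => by simp
  have hY : Hent p (fun ω => (Y ω, ())) = Hent p Y := Hent_congr fun ω ω' => by simp
  have hXY : Hent p (fun ω => (X ω, Y ω, ())) = Hent p (fun ω => (X ω, Y ω)) :=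
    Hent_congr fun ω ω' => by simp
  rw [CMI, hX, hY, hXY, Hent_const hp1] at h
  linarith

theorem Hent_eq_add_sum_of_indep {ι α : Type*} [Fintype ι] [DecidableEq ι] [Fintype α]
    (hp0 : ∀ ω, 0 ≤ p ω) (Z : Ω → U) (X : Ω → ι → α)
    (hind : ∀ z x, pmfOf p (fun ω => (Z ω, X ω)) (z, x)
      = pmfOf p Z z * ∏ i, pmfOf p (fun ω => X ω i) (x i)) :
    Hent p (fun ω => (Z ω, X ω)) = Hent p Z + ∑ i, Hent p (fun ω => X ω i) := by
  have hpoint : ∀ ω, p ω * Real.log (pmfOf p (fun ω => (Z ω, X ω)) (Z ω, X ω))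
      = p ω * Real.log (pmfOf p Z (Z ω))
        + ∑ i, p ω * Real.log (pmfOf p (fun ω => X ω i) (X ω i)) := by
    intro ω
    rcases (hp0 ω).eq_or_lt with hω | hω
    · simp [← hω]
    have hZ : pmfOf p Z (Z ω) ≠ 0 := (hω.trans_le (le_pmfOf_self hp0 Z ω)).ne'
    have hXi : ∀ i, pmfOf p (fun ω => X ω i) (X ω i) ≠ 0 :=
      fun i => (hω.trans_le (le_pmfOf_self hp0 (fun ω => X ω i) ω)).ne'
    rw [hind, Real.log_mul hZ (prod_ne_zero_iff.2 fun i _ => hXi i),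
      Real.log_prod fun i _ => hXi i, mul_add, mul_sum]
  simp only [Hent_eq_neg_sum_mul_log, hpoint, sum_add_distrib, sum_neg_distrib]
  rw [sum_comm, neg_add]

end Entropy

section Restrict

variable {Ω ι α γ : Type*} [Fintype Ω] [DecidableEq ι] [Fintype α] [Fintype γ]

noncomputable def restrictHent (p : Ω → ℝ) (X : Ω → ι → α) (Z : Ω → γ) (J : Finset ι) : ℝ :=
  Hent p (fun ω => ((fun i : ↥J => X ω i), Z ω))

variable {p : Ω → ℝ} (X : Ω → ι → α) (Z : Ω → γ)

theorem restrictHent_empty : restrictHent p X Z ∅ = Hent p Z :=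
  Hent_congr fun ω ω' => by simp [Prod.ext_iff, funext_iff]

theorem restrictHent_univ [Fintype ι] : restrictHent p X Z univ = Hent p (fun ω => (X ω, Z ω)) :=
  Hent_congr fun ω ω' => by simp [Prod.ext_iff, funext_iff]

theorem restrictHent_insert (a : ι) (J : Finset ι) :
    restrictHent p X Z (insert a J) = Hent p (fun ω => (X ω a, (fun i : ↥J => X ω i), Z ω)) :=
  Hent_congr fun ω ω' => by simp [Prod.ext_iff, funext_iff, and_assoc]

theorem restrictHent_submodular (hp0 : ∀ ω, 0 ≤ p ω) {J' J : Finset ι} (h : J' ⊆ J) (a : ι) :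
    restrictHent p X Z (insert a J) + restrictHent p X Z J'
      ≤ restrictHent p X Z J + restrictHent p X Z (insert a J') := by
  have hcmi := CMI_nonneg hp0 (fun ω => X ω a) (fun ω (i : ↥J) => X ω i)
    (fun ω => ((fun i : ↥J' => X ω i), Z ω))
  have hJ : Hent p (fun ω => ((fun i : ↥J => X ω i), (fun i : ↥J' => X ω i), Z ω))
      = restrictHent p X Z J :=
    Hent_congr fun ω ω' => by
      simp only [Prod.ext_iff, funext_iff, Subtype.forall]
      exact ⟨fun h' => ⟨h'.1, h'.2.2⟩, fun h' => ⟨h'.1, fun i hi => h'.1 i (h hi), h'.2⟩⟩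
  have haJ : Hent p (fun ω => (X ω a, (fun i : ↥J => X ω i), (fun i : ↥J' => X ω i), Z ω))
      = restrictHent p X Z (insert a J) := by
    rw [restrictHent_insert]
    exact Hent_congr fun ω ω' => by
      simp only [Prod.ext_iff, funext_iff, Subtype.forall]
      exact ⟨fun h' => ⟨h'.1, h'.2.1, h'.2.2.2⟩,
        fun h' => ⟨h'.1, h'.2.1, fun i hi => h'.2.1 i (h hi), h'.2.2⟩⟩
  rw [CMI, ← restrictHent_insert, hJ, haJ] at hcmi
  change 0 ≤ _ + _ - _ - restrictHent p X Z J' at hcmi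
  linarith

theorem restrictHent_le (hp0 : ∀ ω, 0 ≤ p ω) (hp1 : ∑ ω, p ω = 1) (J : Finset ι) :
    restrictHent p X Z J ≤ Hent p Z + ∑ i ∈ J, Hent p (fun ω => X ω i) := by
  induction J using Finset.induction_on with
  | empty => simp [restrictHent_empty]
  | insert a J ha ih =>
    rw [restrictHent_insert, sum_insert ha]
    have := Hent_prod_le_add hp0 hp1 (fun ω => X ω a) (fun ω => ((fun i : ↥J => X ω i), Z ω))
    change _ ≤ _ + restrictHent p X Z J at this
    linarith

end Restrict

section SetFunction

variable {ι β : Type*} [LinearOrder ι] [AddCommGroup β] (F : Finset ι → β)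

theorem sum_filter_le_sub_filter_lt (J : Finset ι) :
    ∑ i ∈ J, (F {x ∈ J | x ≤ i} - F {x ∈ J | x < i}) = F J - F ∅ := by
  induction J using Finset.induction_on_max with
  | empty => simp
  | insert a S hS ih =>
    have ha : a ∉ S := fun h => lt_irrefl a (hS a h)
    have hle : {x ∈ insert a S | x ≤ a} = insert a S :=
      filter_true_of_mem fun x hx => (mem_insert.1 hx).elim le_of_eq fun h => (hS x h).le
    have hlt : {x ∈ insert a S | x < a} = S := by
      rw [filter_insert, if_neg (lt_irrefl a)]
      exact filter_true_of_mem hS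
    have hS_le : ∀ i ∈ S, {x ∈ insert a S | x ≤ i} = {x ∈ S | x ≤ i} := fun i hi => by
      rw [filter_insert, if_neg (hS i hi).not_ge]
    have hS_lt : ∀ i ∈ S, {x ∈ insert a S | x < i} = {x ∈ S | x < i} := fun i hi => by
      rw [filter_insert, if_neg (hS i hi).not_gt]
    rw [sum_insert ha, hle, hlt, sum_congr rfl fun i hi => by rw [hS_le i hi, hS_lt i hi], ih,
      sub_add_sub_cancel]

variable [LocallyFiniteOrderBot ι]

theorem sum_Iic_sub_Iio [Fintype ι] :
    ∑ i, (F (Iic i) - F (Iio i)) = F univ - F ∅ := by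
  simpa only [filter_ge_eq_Iic, filter_gt_eq_Iio] using sum_filter_le_sub_filter_lt F univ

theorem sum_Iic_sub_Iio_le [PartialOrder β] [IsOrderedAddMonoid β]
    (hF : ∀ J' J a, J' ⊆ J → a ∉ J → F (insert a J) + F J' ≤ F J + F (insert a J'))
    (J : Finset ι) : ∑ i ∈ J, (F (Iic i) - F (Iio i)) ≤ F J - F ∅ := by
  induction J using Finset.induction_on_max with
  | empty => simp
  | insert a S hS ih =>
    have ha : a ∉ S := fun h => lt_irrefl a (hS a h)
    have hstep : F (Iic a) - F (Iio a) ≤ F (insert a S) - F S := by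
      rw [sub_le_sub_iff, ← Iio_insert, add_comm (F (insert a S))]
      exact hF S (Iio a) a (fun x hx => mem_Iio.2 (hS x hx)) notMem_Iio_self
    rw [sum_insert ha, ← sub_add_sub_cancel (F (insert a S)) (F S)]
    exact add_le_add hstep ih

end SetFunction

theorem sum_sum_eq_nsmul_sum_of_card_eq {κ ι β : Type*} [Fintype κ] [Fintype ι] [DecidableEq ι]
    [AddCommMonoid β] (I : κ → Finset ι) {s : ℕ} (hcov : ∀ x, #{j | x ∈ I j} = s) (c : ι → β) :
    ∑ j, ∑ i ∈ I j, c i = s • ∑ i, c i := by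
  rw [sum_comm' (t' := univ) (s' := fun i => {j | i ∈ I j}) (by simp), smul_sum]
  exact sum_congr rfl fun i _ => by rw [sum_const, hcov]

section Chain

variable {Ω ι α T U : Type*} [Fintype Ω] [LinearOrder ι] [LocallyFiniteOrderBot ι]
  [Fintype α] [Fintype T] [Fintype U]

/-- Under independence this is the chain-rule term `I(X_i ; Y | Z, X_{<i})`. -/
noncomputable def chainTerm (p : Ω → ℝ) (X : Ω → ι → α) (Y : Ω → T) (Z : Ω → U) (i : ι) : ℝ :=
  Hent p (fun ω => X ω i) + restrictHent p X (fun ω => (Y ω, Z ω)) (Iio i)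
    - restrictHent p X (fun ω => (Y ω, Z ω)) (Iic i)

variable {p : Ω → ℝ} (X : Ω → ι → α) (Y : Ω → T) (Z : Ω → U)

theorem CMI_restrict_le_sum_chainTerm (hp0 : ∀ ω, 0 ≤ p ω) (hp1 : ∑ ω, p ω = 1)
    (J : Finset ι) :
    CMI p (fun ω (i : ↥J) => X ω i) Y Z ≤ ∑ i ∈ J, chainTerm p X Y Z i := by
  have hZ := restrictHent_le X Z hp0 hp1 J
  have hYZ := sum_Iic_sub_Iio_le (restrictHent p X fun ω => (Y ω, Z ω))
    (fun _ _ a h _ => restrictHent_submodular X _ hp0 h a) J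
  rw [restrictHent_empty, sum_sub_distrib] at hYZ
  simp only [chainTerm, sum_sub_distrib, sum_add_distrib]
  change restrictHent p X Z J + _ - restrictHent p X (fun ω => (Y ω, Z ω)) J - _ ≤ _
  linarith

theorem CMI_eq_sum_chainTerm [Fintype ι] (hp0 : ∀ ω, 0 ≤ p ω)
    (hind : ∀ z x, pmfOf p (fun ω => (Z ω, X ω)) (z, x)
      = pmfOf p Z z * ∏ i, pmfOf p (fun ω => X ω i) (x i)) :
    CMI p X Y Z = ∑ i, chainTerm p X Y Z i := by
  have hXZ : Hent p (fun ω => (X ω, Z ω)) = Hent p Z + ∑ i, Hent p (fun ω => X ω i) :=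
    (Hent_congr fun ω ω' => by simp [Prod.ext_iff, and_comm]).trans
      (Hent_eq_add_sum_of_indep hp0 Z X hind)
  have hYZ := sum_Iic_sub_Iio (restrictHent p X fun ω => (Y ω, Z ω))
  rw [restrictHent_univ, restrictHent_empty, sum_sub_distrib] at hYZ
  simp only [chainTerm, sum_sub_distrib, sum_add_distrib]
  rw [CMI, hXZ]
  linarith

end Chain

/-- If `B₁,…,B_m` are mutually independent and jointly independent of `Y₀`, and
`I₁,…,I_t ⊆ [m]` are subsets such that every element of `[m]` lies in exactly `s` of them,
then `∑ⱼ I(B_{Iⱼ}; Y ∣ Y₀) ≤ s · I(B_{[m]}; Y ∣ Y₀)`. -/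
theorem sum_cmi_cover_le
    {Ω M T BT : Type*} [Fintype Ω] [Fintype M] [Fintype T] [Fintype BT] {m : ℕ}
    (p : Ω → ℝ) (hp0 : ∀ ω, 0 ≤ p ω) (hp1 : ∑ ω, p ω = 1)
    (Y0 : Ω → M) (Y : Ω → T) (B : Ω → Fin m → BT)
    (hind : ∀ (y : M) (b : Fin m → BT),
      pmfOf p (fun ω => (Y0 ω, B ω)) (y, b)
        = pmfOf p Y0 y * ∏ i : Fin m, pmfOf p (fun ω => B ω i) (b i))
    (t s : ℕ) (I : Fin t → Finset (Fin m))
    (hcov : ∀ x : Fin m, (Finset.univ.filter (fun j => x ∈ I j)).card = s) :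
    ∑ j : Fin t, CMI p (fun ω => fun i : ↥(I j) => B ω i) Y Y0
      ≤ (s : ℝ) * CMI p B Y Y0 := by
  calc ∑ j, CMI p (fun ω => fun i : ↥(I j) => B ω i) Y Y0
      ≤ ∑ j, ∑ i ∈ I j, chainTerm p B Y Y0 i :=
        sum_le_sum fun j _ => CMI_restrict_le_sum_chainTerm B Y Y0 hp0 hp1 (I j)
    _ = s • ∑ i, chainTerm p B Y Y0 i := sum_sum_eq_nsmul_sum_of_card_eq I hcov _
    _ = s * CMI p B Y Y0 := by rw [CMI_eq_sum_chainTerm B Y Y0 hp0 hind, nsmul_eq_mul]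
end

section
/- The dual of a generalized Reed–Solomon code defined by evaluation points α and multipliers v is generated by the GRS matrix with the same evaluation points and multipliers u_n = (v_n ∏_{i≠n}(α_n − α_i))^{−1}. Precisely: with G = GRS_{K×N}(v,α) = [v_j α_j^{i−1}]_{i∈[K],j∈[N]} and G⊥ = GRS_{(N−K)×N}(u,α), one has G⊥ · Gᵀ = 0 and rank(G⊥) = N−K. -/
open Finset Polynomial

lemma key_sum {F : Type*} [Field F] {N : ℕ} (α : Fin N → F) (hα : Function.Injective α)
    {m : ℕ} (hm : m + 2 ≤ N) :
    ∑ j, α j ^ m * (∏ l ∈ Finset.univ.erase j, (α j - α l))⁻¹ = 0 := by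
  have hvs : Set.InjOn α (Finset.univ : Finset (Fin N)) := hα.injOn
  have hcard : #(Finset.univ : Finset (Fin N)) = N := by simp
  have hf : (X ^ m : F[X]) = Lagrange.interpolate Finset.univ α (fun j => α j ^ m) := by
    refine Lagrange.eq_interpolate_of_eval_eq _ hvs ?_ (fun i _ => by simp)
    rw [hcard, degree_X_pow]
    exact_mod_cast lt_of_lt_of_le (by omega) le_rfl
  have h := congrArg (fun p : F[X] => p.coeff (N - 1)) hf
  simp only [coeff_X_pow, Lagrange.interpolate_apply, finset_sum_coeff, coeff_C_mul] at h
  have hne : ¬ (N - 1 = m) := by omega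
  rw [if_neg hne] at h
  have hb : ∀ j : Fin N, (Lagrange.basis Finset.univ α j).coeff (N - 1)
      = (∏ l ∈ Finset.univ.erase j, (α j - α l))⁻¹ := by
    intro j
    have hdeg : (Lagrange.basis Finset.univ α j).natDegree = N - 1 := by
      have := Lagrange.degree_basis hvs (Finset.mem_univ j)
      rw [hcard] at this
      exact natDegree_eq_of_degree_eq_some this
    rw [show N - 1 = (Lagrange.basis Finset.univ α j).natDegree from hdeg.symm,
      ← leadingCoeff, Lagrange.basis, leadingCoeff_prod, ← Finset.prod_inv_distrib]
    refine Finset.prod_congr rfl fun l _ => ?_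
    rw [Lagrange.basisDivisor, leadingCoeff_mul, leadingCoeff_C,
      (monic_X_sub_C (α l)).leadingCoeff, mul_one]
  simp only [hb] at h
  exact h.symm

/-- The dual of a generalized Reed–Solomon code `G = GRS_{K×N}(v, α) = [v_j α_j^{i−1}]` is
generated by the GRS matrix `G⊥ = GRS_{(N−K)×N}(u, α)` with the same evaluation points and
multipliers `u_n = (v_n ∏_{i≠n}(α_n − α_i))⁻¹`: one has `G⊥ · Gᵀ = 0` and
`rank G⊥ = N − K`. -/
theorem grs_dual {F : Type*} [Field F] [Fintype F] {N K : ℕ} (hK : K ≤ N)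
    (hN : N ≤ Fintype.card F)
    (α : Fin N → F) (hα : Function.Injective α)
    (v : Fin N → F) (hv : ∀ j, v j ≠ 0) :
    (Matrix.of (fun (i : Fin (N - K)) (j : Fin N) =>
        (v j * ∏ l ∈ Finset.univ.erase j, (α j - α l))⁻¹ * α j ^ (i : ℕ))
      * (Matrix.of fun (i : Fin K) (j : Fin N) => v j * α j ^ (i : ℕ)).transpose = 0) ∧
    (Matrix.of (fun (i : Fin (N - K)) (j : Fin N) =>
        (v j * ∏ l ∈ Finset.univ.erase j, (α j - α l))⁻¹ * α j ^ (i : ℕ))).rank = N - K := by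
  have hP : ∀ j : Fin N, (∏ l ∈ Finset.univ.erase j, (α j - α l)) ≠ 0 := by
    intro j
    refine Finset.prod_ne_zero_iff.mpr fun l hl => sub_ne_zero_of_ne fun he => ?_
    exact (Finset.mem_erase.mp hl).1 (hα he).symm
  constructor
  · ext i k
    simp only [Matrix.mul_apply, Matrix.transpose_apply, Matrix.of_apply, Matrix.zero_apply]
    have : ∀ j : Fin N, (v j * ∏ l ∈ Finset.univ.erase j, (α j - α l))⁻¹ * α j ^ (i : ℕ)
        * (v j * α j ^ (k : ℕ))
        = α j ^ ((i : ℕ) + (k : ℕ)) * (∏ l ∈ Finset.univ.erase j, (α j - α l))⁻¹ := by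
      intro j
      rw [show (v j * ∏ l ∈ Finset.univ.erase j, (α j - α l))⁻¹ * α j ^ (i : ℕ)
          * (v j * α j ^ (k : ℕ)) = (v j * (v j)⁻¹)
          * ((∏ l ∈ Finset.univ.erase j, (α j - α l))⁻¹ * (α j ^ (i:ℕ) * α j ^ (k:ℕ))) by
        rw [mul_inv]; ring, mul_inv_cancel₀ (hv j), one_mul, pow_add]
      ring
    rw [Finset.sum_congr rfl fun j _ => this j]
    exact key_sum α hα (by omega)
  · set M : Matrix (Fin (N - K)) (Fin N) F := Matrix.of (fun (i : Fin (N - K)) (j : Fin N) =>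
        (v j * ∏ l ∈ Finset.univ.erase j, (α j - α l))⁻¹ * α j ^ (i : ℕ)) with hM
    refine le_antisymm (by simpa using M.rank_le_card_height) ?_
    set c : Fin (N - K) → Fin N := Fin.castLE (Nat.sub_le N K) with hc
    have hS : M.submatrix id c = M * (1 : Matrix (Fin N) (Fin N) F).submatrix id c := by
      ext i j
      simp [Matrix.mul_apply, Matrix.one_apply]
    have hrank_le : (M.submatrix id c).rank ≤ M.rank := by
      rw [hS]; exact Matrix.rank_mul_le_left _ _
    have hdet : IsUnit (M.submatrix id c).det := by
      have : M.submatrix id c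
          = (Matrix.vandermonde (fun j => α (c j))).transpose
            * Matrix.diagonal (fun j => (v (c j) * ∏ l ∈ Finset.univ.erase (c j), (α (c j) - α l))⁻¹) := by
        ext i j
        simp only [hM, Matrix.mul_apply, Matrix.vandermonde, Matrix.diagonal_apply,
          Matrix.submatrix_apply, Matrix.of_apply, Matrix.transpose_apply, id_eq,
          mul_ite, mul_zero, Finset.sum_ite_eq', Finset.mem_univ, if_true, mul_inv]
        ring
      rw [this, Matrix.det_mul, Matrix.det_transpose, Matrix.det_vandermonde,
        Matrix.det_diagonal]
      refine (IsUnit.mul ?_ ?_)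
      · refine isUnit_iff_ne_zero.mpr (Finset.prod_ne_zero_iff.mpr fun i _ =>
          Finset.prod_ne_zero_iff.mpr fun l hl => sub_ne_zero_of_ne fun he => ?_)
        have hli : l = i := Fin.castLE_injective _ (hα he)
        simp [hli] at hl
      · exact isUnit_iff_ne_zero.mpr (Finset.prod_ne_zero_iff.mpr fun j _ =>
          inv_ne_zero (mul_ne_zero (hv _) (hP _)))
    have := Matrix.rank_of_isUnit _ ((Matrix.isUnit_iff_isUnit_det _).mpr hdet)
    calc (N - K : ℕ) = (M.submatrix id c).rank := by simp [this]
      _ ≤ M.rank := hrank_le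
end
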